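/- Let Q be a finite nonempty state space, κ a Markov kernel from Q to Q, and P_q the trajectory measure of the chain (X_n) started at q. Suppose there are ε > 0, m ∈ ℕ, and a rank function rk : Q → ℕ with rk(q) ≤ m for all q, such that for every state q with rk(q) > 0 one has κ(q)({ q' | rk(q') < rk(q) }) ≥ ε. Let W_0 = { q | rk(q) = 0 }. Then for every start state q, the probability of hitting W_0 within m steps satisfies P_q( ∃ k ≤ m, X_k ∈ W_0 ) ≥ ε^m. -/

import Mathlib

/-!
Call a step `a → b` admissible if `rk a = 0` or `rk b < rk a`. From every state the kernel
takes an admissible step with probability at least `ε`, so summing the cylinder probabilities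
of the admissible paths of length `m` shows that the first `m` steps are all admissible with
probability at least `ε ^ m`. Along such a trajectory the rank, which starts at most `m`,
decreases strictly until it reaches `0`, hence it reaches `0` within `m` steps.
-/

open MeasureTheory ProbabilityTheory ENNReal

/-- `P` is the family of trajectory (Ionescu–Tulcea) measures of the canonical
Markov chain with transition kernel `κ` on the finite discrete state space `Q`:
`P q` is the law of `(X₀, X₁, …)` with `X₀ = q`, characterized by its values on
the cylinder sets (which uniquely determine a measure on `ℕ → Q`). -/
def IsTrajMeasure {Q : Type*} [Fintype Q] [MeasurableSpace Q]
    [DiscreteMeasurableSpace Q] (κ : Kernel Q Q) (P : Q → Measure (ℕ → Q)) : Prop :=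
  ∀ (q : Q) (n : ℕ) (w : ℕ → Q),
    P q {ω | ∀ k ≤ n, ω k = w k} =
      Set.indicator ({q} : Set Q) (1 : Q → ℝ≥0∞) (w 0) *
        ∏ i ∈ Finset.range n, κ (w i) {w (i + 1)}

open Finset

theorem exists_le_eq_zero_of_eq_zero_or_apply_succ_lt {f : ℕ → ℕ} {m : ℕ} (h0 : f 0 ≤ m)
    (hf : ∀ k < m, f k = 0 ∨ f (k + 1) < f k) : ∃ k ≤ m, f k = 0 := by
  induction m generalizing f with
  | zero => exact ⟨0, le_rfl, Nat.le_zero.mp h0⟩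
  | succ m ih =>
    rcases hf 0 m.succ_pos with hzero | hlt
    · exact ⟨0, m.succ.zero_le, hzero⟩
    · obtain ⟨k, hk, hfk⟩ := ih (f := fun k => f (k + 1)) (by omega)
        fun k hk => hf (k + 1) (by omega)
      exact ⟨k + 1, by omega, hfk⟩

theorem Fin.sum_univ_pi_snoc {n : ℕ} {α M : Type*} [Fintype α] [AddCommMonoid M]
    (f : (Fin (n + 1) → α) → M) : ∑ t, f t = ∑ t : Fin n → α, ∑ x, f (Fin.snoc t x) := by
  rw [← Fintype.sum_equiv (Fin.snocEquiv fun _ => α) (fun p => f (Fin.snoc p.2 p.1)) f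
    fun _ => rfl, Fintype.sum_prod_type, sum_comm]

section Paths

variable {Q : Type*} {n : ℕ}

def IsRelPath (R : Q → Q → Prop) (t : Fin (n + 1) → Q) : Prop :=
  ∀ i : Fin n, R (t i.castSucc) (t i.succ)

theorem isRelPath_snoc {R : Q → Q → Prop} (t : Fin (n + 1) → Q) (x : Q) :
    IsRelPath R (Fin.snoc t x : Fin (n + 2) → Q) ↔ IsRelPath R t ∧ R (t (Fin.last n)) x := by
  simp [IsRelPath, Fin.forall_fin_succ', Fin.succ_castSucc, -Fin.castSucc_succ]

variable [MeasurableSpace Q]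

noncomputable def pathWeight (κ : Kernel Q Q) (t : Fin (n + 1) → Q) : ℝ≥0∞ :=
  ∏ i : Fin n, κ (t i.castSucc) {t i.succ}

theorem pathWeight_snoc (κ : Kernel Q Q) (t : Fin (n + 1) → Q) (x : Q) :
    pathWeight κ (Fin.snoc t x : Fin (n + 2) → Q) = pathWeight κ t * κ (t (Fin.last n)) {x} := by
  simp [pathWeight, Fin.prod_univ_castSucc, Fin.succ_castSucc, -Fin.castSucc_succ]

open Classical in
theorem pow_le_sum_pathWeight [Fintype Q] [MeasurableSingletonClass Q] {κ : Kernel Q Q}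
    {R : Q → Q → Prop} {ε : ℝ≥0∞} (hR : ∀ a, ε ≤ κ a {b | R a b}) (q : Q) :
    ∀ n : ℕ, ε ^ n ≤ ∑ t : Fin (n + 1) → Q with t 0 = q ∧ IsRelPath R t, pathWeight κ t
  | 0 => by
    have hq : (fun _ => q : Fin 1 → Q) ∈ ({t | t 0 = q ∧ IsRelPath R t} : Finset _) := by
      simp [IsRelPath]
    simpa [pathWeight] using single_le_sum (f := pathWeight κ) (fun _ _ => zero_le) hq
  | n + 1 => calc
    ε ^ (n + 1) = ε ^ n * ε := pow_succ ε n
    _ ≤ (∑ t : Fin (n + 1) → Q with t 0 = q ∧ IsRelPath R t, pathWeight κ t) * ε := by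
      gcongr
      exact pow_le_sum_pathWeight hR q n
    _ ≤ ∑ t : Fin (n + 1) → Q with t 0 = q ∧ IsRelPath R t,
          pathWeight κ t * κ (t (Fin.last n)) {b | R (t (Fin.last n)) b} := by
      rw [sum_mul]
      gcongr
      exact hR _
    _ = ∑ t : Fin (n + 1) → Q with t 0 = q ∧ IsRelPath R t, ∑ x with R (t (Fin.last n)) x,
          pathWeight κ (Fin.snoc t x : Fin (n + 2) → Q) := by
      simp_rw [pathWeight_snoc, ← mul_sum, sum_measure_singleton, coe_filter, mem_univ, true_and]
    _ = ∑ t : Fin (n + 2) → Q with t 0 = q ∧ IsRelPath R t, pathWeight κ t := by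
      simp only [sum_filter]
      rw [Fin.sum_univ_pi_snoc (n := n + 1)]
      refine sum_congr rfl fun t _ => ?_
      simp [isRelPath_snoc, ite_and]

namespace IsTrajMeasure

variable [Fintype Q] [DiscreteMeasurableSpace Q] {κ : Kernel Q Q} {P : Q → Measure (ℕ → Q)}

open Fin.NatCast Classical in
theorem measure_preimage_restrict_singleton (hP : IsTrajMeasure κ P) (q : Q)
    (t : Fin (n + 1) → Q) :
    P q ((fun (ω : ℕ → Q) (i : Fin (n + 1)) => ω i) ⁻¹' {t}) =
      if t 0 = q then pathWeight κ t else 0 := by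
  have hcyl : (fun (ω : ℕ → Q) (i : Fin (n + 1)) => ω i) ⁻¹' {t} =
      {ω | ∀ k ≤ n, ω k = t (k : Fin (n + 1))} := by
    ext ω
    simp only [Set.mem_preimage, Set.mem_singleton_iff, funext_iff, Fin.forall_iff,
      Nat.lt_succ_iff, Set.mem_ofPred_eq]
    exact forall₂_congr fun k hk => by rw [Fin.natCast_eq_mk (Nat.lt_succ_of_le hk)]
  rw [hcyl, hP q n, ← Fin.prod_univ_eq_prod_range]
  simp [pathWeight, Set.indicator, Fin.coe_eq_castSucc]

open Classical in
theorem measure_isRelPath (hP : IsTrajMeasure κ P) (R : Q → Q → Prop) (q : Q) (n : ℕ) :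
    P q {ω | ∀ k < n, R (ω k) (ω (k + 1))} =
      ∑ t : Fin (n + 1) → Q with t 0 = q ∧ IsRelPath R t, pathWeight κ t := by
  have hset : {ω : ℕ → Q | ∀ k < n, R (ω k) (ω (k + 1))} =
      (fun (ω : ℕ → Q) (i : Fin (n + 1)) => ω i) ⁻¹'
        ↑({t | IsRelPath R t} : Finset (Fin (n + 1) → Q)) := by
    ext ω
    simp [IsRelPath, Fin.forall_iff]
  rw [hset, ← sum_measure_preimage_singleton _ fun t _ =>
    (measurable_pi_lambda _ fun i => measurable_pi_apply _) (measurableSet_singleton t)]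
  simp_rw [hP.measure_preimage_restrict_singleton, sum_filter, ← ite_and, and_comm]

end IsTrajMeasure

end Paths

theorem traj_hits_rank_zero_general {Q : Type*} [Fintype Q]
    [MeasurableSpace Q] [DiscreteMeasurableSpace Q]
    (κ : Kernel Q Q) [IsMarkovKernel κ]
    (P : Q → Measure (ℕ → Q))
    (hP : IsTrajMeasure κ P)
    (ε : ℝ≥0∞) (hε1 : ε ≤ 1) (m : ℕ) (rk : Q → ℕ)
    (hrk : ∀ q : Q, rk q ≤ m)
    (hstep : ∀ q : Q, 0 < rk q → ε ≤ κ q {q' | rk q' < rk q}) :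
    ∀ q : Q, ε ^ m ≤ P q {ω | ∃ k ≤ m, ω k ∈ {q' : Q | rk q' = 0}} := by
  intro q
  let R : Q → Q → Prop := fun a b => rk a = 0 ∨ rk b < rk a
  have hR : ∀ a, ε ≤ κ a {b | R a b} := by
    intro a
    rcases Nat.eq_zero_or_pos (rk a) with ha | ha
    · simpa [R, ha] using hε1
    · exact (hstep a ha).trans (measure_mono fun b hb => Or.inr hb)
  calc ε ^ m ≤ _ := pow_le_sum_pathWeight hR q m
    _ = P q {ω | ∀ k < m, R (ω k) (ω (k + 1))} := (hP.measure_isRelPath R q m).symm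
    _ ≤ _ := measure_mono fun ω hω =>
      exists_le_eq_zero_of_eq_zero_or_apply_succ_lt (f := fun k => rk (ω k)) (hrk _) hω

/-- Suppose `rk : Q → ℕ` is a rank function bounded by `m` such that
from every state of positive rank the kernel moves to a state of strictly
smaller rank with probability at least `ε`. Let `W₀ = {q | rk q = 0}`. Then for
every start state `q`, the probability of hitting `W₀` within `m` steps is at
least `ε ^ m`. -/
theorem traj_hits_rank_zero {Q : Type*} [Fintype Q] [Nonempty Q]
    [MeasurableSpace Q] [DiscreteMeasurableSpace Q]
    (κ : Kernel Q Q) [IsMarkovKernel κ]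
    (P : Q → Measure (ℕ → Q)) (hprob : ∀ q, IsProbabilityMeasure (P q))
    (hP : IsTrajMeasure κ P)
    (ε : ℝ≥0∞) (hε : 0 < ε) (hε1 : ε ≤ 1) (m : ℕ) (rk : Q → ℕ)
    (hrk : ∀ q : Q, rk q ≤ m)
    (hstep : ∀ q : Q, 0 < rk q → ε ≤ κ q {q' | rk q' < rk q}) :
    ∀ q : Q, ε ^ m ≤ P q {ω | ∃ k ≤ m, ω k ∈ {q' : Q | rk q' = 0}} :=
  traj_hits_rank_zero_general κ P hP ε hε1 m rk hrk hstep
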